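/- arXiv:1802.02440 — 2 statements merged into one kernel-verified Lean document; each statement's English description precedes it below -/
import Mathlib

section
/- Consider a metric graph Γ of type (0,2,0): vertices A, B, C, D; two parallel edges E_a, E_b between A and B of lengths a, b > 0; an edge E_c between A and C of length c > 0; an edge E_d between B and D of length d > 0; and two parallel edges E_e, E_f between C and D of lengths e, f > 0. Assume c = d. Let χ : Γ → ℝ be a continuous piecewise linear function with integer slopes such that K_Γ + div(χ) ≥ 0, i.e., χ is convex on each edge and at each vertex V the sum over all attached edges E of the outgoing slopes ∂χ/∂E(V) is at least −1. Then χ(A) = χ(B) and χ(C) = χ(D). In particular, the canonical linear system of Γ does not separate the points A and B. -/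
open Set


lemma myInt_one_le {s : ℝ} (h : ∃ n : ℤ, s = (n : ℝ)) (hs : 0 < s) : 1 ≤ s := by
  obtain ⟨n, rfl⟩ := h
  exact_mod_cast (by exact_mod_cast hs : (0:ℤ) < n)

lemma myInt_two_le {s : ℝ} (h : ∃ n : ℤ, s = (n : ℝ)) (hs : 1 < s) : 2 ≤ s := by
  obtain ⟨n, rfl⟩ := h
  exact_mod_cast (by exact_mod_cast hs : (1:ℤ) < n)

lemma myInt_le_neg_one {s : ℝ} (h : ∃ n : ℤ, s = (n : ℝ)) (hs : s < 0) : s ≤ -1 := by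
  obtain ⟨n, rfl⟩ := h
  have h1 : n < 0 := by exact_mod_cast hs
  have h2 : n ≤ -1 := by omega
  have := (Int.cast_le (R := ℝ)).mpr h2
  push_cast at this
  linarith

lemma myInt_le_neg_two {s : ℝ} (h : ∃ n : ℤ, s = (n : ℝ)) (hs : s < -1) : s ≤ -2 := by
  obtain ⟨n, rfl⟩ := h
  have h1 : n < -1 := by
    have : (n:ℝ) < -1 := hs
    by_contra hcon
    push_neg at hcon
    have := (Int.cast_le (R := ℝ)).mpr hcon
    push_cast at this
    linarith
  have h2 : n ≤ -2 := by omega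
  have := (Int.cast_le (R := ℝ)).mpr h2
  push_cast at this
  linarith

lemma myEdge_bounds {L s0 sL : ℝ} {f : ℝ → ℝ} (hL : 0 < L)
    (hconv : ConvexOn ℝ (Icc 0 L) f)
    (h0 : HasDerivWithinAt f s0 (Icc 0 L) 0)
    (hLd : HasDerivWithinAt f sL (Icc 0 L) L) :
    s0 * L ≤ f L - f 0 ∧ f L - f 0 ≤ sL * L := by
  have hm0 : (0:ℝ) ∈ Icc 0 L := left_mem_Icc.2 hL.le
  have hmL : L ∈ Icc (0:ℝ) L := right_mem_Icc.2 hL.le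
  have h1 := hconv.le_slope_of_hasDerivWithinAt hm0 hmL hL h0
  have h2 := hconv.slope_le_of_hasDerivWithinAt hm0 hmL hL hLd
  rw [slope_def_field, sub_zero] at h1 h2
  exact ⟨(le_div_iff₀ hL).mp h1, (div_le_iff₀ hL).mp h2⟩

lemma myPos_of_le_mul {s L v : ℝ} (hL : 0 < L) (hv : 0 < v) (h : v ≤ s * L) : 0 < s := by
  nlinarith
lemma myNeg_of_mul_le {s L v : ℝ} (hL : 0 < L) (hv : v < 0) (h : s * L ≤ v) : s < 0 := by
  nlinarith
lemma myGt_one_of_le_mul {s L v : ℝ} (hL : 0 < L) (hv : L < v) (h : v ≤ s * L) : 1 < s := by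
  nlinarith
lemma myLt_neg_one_of_mul_le {s L v : ℝ} (hL : 0 < L) (hv : v < -L) (h : s * L ≤ v) : s < -1 := by
  nlinarith
lemma myNonpos_of_mul_le {s L v : ℝ} (hL : 0 < L) (hv : v ≤ 0) (h : s * L ≤ v) : s ≤ 0 := by
  nlinarith
lemma myNonneg_of_le_mul {s L v : ℝ} (hL : 0 < L) (hv : 0 ≤ v) (h : v ≤ s * L) : 0 ≤ s := by
  nlinarith

/-- Lemma 4.2 of the paper: on a tropical curve of type (0,2,0) with the two
cut edges of equal length `c = d`, any piecewise linear function `χ` with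
integer slopes satisfying `K_Γ + div(χ) ≥ 0` takes equal values at `A` and `B`,
and at `C` and `D`.  Each edge is modelled by the restriction of `χ` to an
interval `[0, length]`, convex on that interval, with the outgoing slopes at
the endpoints given as one-sided derivatives. -/
theorem type020_canonical_not_separating
    (a b c d e f : ℝ)
    (ha : 0 < a) (hb : 0 < b) (hc : 0 < c) (hd : 0 < d) (he : 0 < e) (hf : 0 < f)
    (hcd : c = d)
    (vA vB vC vD : ℝ)
    (fa fb fc fd fe ff : ℝ → ℝ)
    -- convexity of χ on each edge (interior part of K_Γ + div(χ) ≥ 0)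
    (hconva : ConvexOn ℝ (Icc 0 a) fa) (hconvb : ConvexOn ℝ (Icc 0 b) fb)
    (hconvc : ConvexOn ℝ (Icc 0 c) fc) (hconvd : ConvexOn ℝ (Icc 0 d) fd)
    (hconve : ConvexOn ℝ (Icc 0 e) fe) (hconvf : ConvexOn ℝ (Icc 0 f) ff)
    -- endpoint values: E_a, E_b join A and B; E_c joins A and C;
    -- E_d joins B and D; E_e, E_f join C and D
    (ha0 : fa 0 = vA) (haa : fa a = vB)
    (hb0 : fb 0 = vA) (hbb : fb b = vB)
    (hc0 : fc 0 = vA) (hcc : fc c = vC)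
    (hd0 : fd 0 = vB) (hdd : fd d = vD)
    (he0 : fe 0 = vC) (hee : fe e = vD)
    (hf0 : ff 0 = vC) (hff : ff f = vD)
    -- the one-sided derivatives of χ at the endpoints of each edge
    (sa0 saa sb0 sbb sc0 scc sd0 sdd se0 see sf0 sff : ℝ)
    (hsa0 : HasDerivWithinAt fa sa0 (Icc 0 a) 0)
    (hsaa : HasDerivWithinAt fa saa (Icc 0 a) a)
    (hsb0 : HasDerivWithinAt fb sb0 (Icc 0 b) 0)
    (hsbb : HasDerivWithinAt fb sbb (Icc 0 b) b)
    (hsc0 : HasDerivWithinAt fc sc0 (Icc 0 c) 0)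
    (hscc : HasDerivWithinAt fc scc (Icc 0 c) c)
    (hsd0 : HasDerivWithinAt fd sd0 (Icc 0 d) 0)
    (hsdd : HasDerivWithinAt fd sdd (Icc 0 d) d)
    (hse0 : HasDerivWithinAt fe se0 (Icc 0 e) 0)
    (hsee : HasDerivWithinAt fe see (Icc 0 e) e)
    (hsf0 : HasDerivWithinAt ff sf0 (Icc 0 f) 0)
    (hsff : HasDerivWithinAt ff sff (Icc 0 f) f)
    -- integrality of all slopes
    (hint : ∀ s ∈ ({sa0, saa, sb0, sbb, sc0, scc, sd0, sdd, se0, see, sf0, sff} :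
      Set ℝ), ∃ n : ℤ, s = (n : ℝ))
    -- vertex conditions: sum of outgoing slopes at each vertex ≥ -1
    (hvA : sa0 + sb0 + sc0 ≥ -1)
    (hvB : -saa + -sbb + sd0 ≥ -1)
    (hvC : -scc + se0 + sf0 ≥ -1)
    (hvD : -sdd + -see + -sff ≥ -1) :
    vA = vB ∧ vC = vD := by
  -- integrality of each slope
  have i_a0 : ∃ n : ℤ, sa0 = (n:ℝ) := hint _ (by simp)
  have i_aa : ∃ n : ℤ, saa = (n:ℝ) := hint _ (by simp)
  have i_b0 : ∃ n : ℤ, sb0 = (n:ℝ) := hint _ (by simp)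
  have i_bb : ∃ n : ℤ, sbb = (n:ℝ) := hint _ (by simp)
  have i_c0 : ∃ n : ℤ, sc0 = (n:ℝ) := hint _ (by simp)
  have i_cc : ∃ n : ℤ, scc = (n:ℝ) := hint _ (by simp)
  have i_d0 : ∃ n : ℤ, sd0 = (n:ℝ) := hint _ (by simp)
  have i_dd : ∃ n : ℤ, sdd = (n:ℝ) := hint _ (by simp)
  have i_e0 : ∃ n : ℤ, se0 = (n:ℝ) := hint _ (by simp)
  have i_ee : ∃ n : ℤ, see = (n:ℝ) := hint _ (by simp)
  have i_f0 : ∃ n : ℤ, sf0 = (n:ℝ) := hint _ (by simp)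
  have i_ff : ∃ n : ℤ, sff = (n:ℝ) := hint _ (by simp)
  -- slope bounds on each edge
  obtain ⟨Ba1, Ba2⟩ := myEdge_bounds ha hconva hsa0 hsaa
  obtain ⟨Bb1, Bb2⟩ := myEdge_bounds hb hconvb hsb0 hsbb
  obtain ⟨Bc1, Bc2⟩ := myEdge_bounds hc hconvc hsc0 hscc
  obtain ⟨Bd1, Bd2⟩ := myEdge_bounds hd hconvd hsd0 hsdd
  obtain ⟨Be1, Be2⟩ := myEdge_bounds he hconve hse0 hsee
  obtain ⟨Bf1, Bf2⟩ := myEdge_bounds hf hconvf hsf0 hsff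
  rw [ha0, haa] at Ba1 Ba2
  rw [hb0, hbb] at Bb1 Bb2
  rw [hc0, hcc] at Bc1 Bc2
  rw [hd0, hdd] at Bd1 Bd2
  rw [he0, hee] at Be1 Be2
  rw [hf0, hff] at Bf1 Bf2
  clear hconva hconvb hconvc hconvd hconve hconvf hsa0 hsaa hsb0 hsbb hsc0 hscc
  clear hsd0 hsdd hse0 hsee hsf0 hsff hint ha0 haa hb0 hbb hc0 hcc hd0 hdd
  clear he0 hee hf0 hff fa fb fc fd fe ff
  have hAB : vA = vB := by
    rcases lt_trichotomy vA vB with hlt | heq | hgt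
    · exfalso
      have h1 : 1 ≤ saa := myInt_one_le i_aa (myPos_of_le_mul ha (by linarith) Ba2)
      have h2 : 1 ≤ sbb := myInt_one_le i_bb (myPos_of_le_mul hb (by linarith) Bb2)
      have h3 : 1 ≤ sd0 := by linarith
      have hdB : d ≤ vD - vB := le_trans (le_mul_of_one_le_left hd.le h3) Bd1
      have h4 : 1 ≤ sdd := myInt_one_le i_dd (myPos_of_le_mul hd (by linarith) Bd2)
      have hDC : vD ≤ vC := by
        by_contra hcon
        push_neg at hcon
        have k1 : 1 ≤ see := myInt_one_le i_ee (myPos_of_le_mul he (by linarith) Be2)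
        have k2 : 1 ≤ sff := myInt_one_le i_ff (myPos_of_le_mul hf (by linarith) Bf2)
        linarith
      have h5 : 2 ≤ scc := myInt_two_le i_cc (myGt_one_of_le_mul hc (by linarith) Bc2)
      have h6 : se0 ≤ 0 := myNonpos_of_mul_le he (by linarith) Be1
      have h7 : sf0 ≤ 0 := myNonpos_of_mul_le hf (by linarith) Bf1
      linarith
    · exact heq
    · exfalso
      have h1 : sa0 ≤ -1 := myInt_le_neg_one i_a0 (myNeg_of_mul_le ha (by linarith) Ba1)
      have h2 : sb0 ≤ -1 := myInt_le_neg_one i_b0 (myNeg_of_mul_le hb (by linarith) Bb1)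
      have h3 : 1 ≤ sc0 := by linarith
      have hcC : c ≤ vC - vA := le_trans (le_mul_of_one_le_left hc.le h3) Bc1
      have h4 : 1 ≤ scc := myInt_one_le i_cc (myPos_of_le_mul hc (by linarith) Bc2)
      have hCD : vC ≤ vD := by
        by_contra hcon
        push_neg at hcon
        have k1 : se0 ≤ -1 := myInt_le_neg_one i_e0 (myNeg_of_mul_le he (by linarith) Be1)
        have k2 : sf0 ≤ -1 := myInt_le_neg_one i_f0 (myNeg_of_mul_le hf (by linarith) Bf1)
        linarith
      have h5 : 2 ≤ sdd := myInt_two_le i_dd (myGt_one_of_le_mul hd (by linarith) Bd2)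
      have h6 : 0 ≤ see := myNonneg_of_le_mul he (by linarith) Be2
      have h7 : 0 ≤ sff := myNonneg_of_le_mul hf (by linarith) Bf2
      linarith
  refine ⟨hAB, ?_⟩
  rcases lt_trichotomy vC vD with hlt | heq | hgt
  · exfalso
    have h1 : 1 ≤ see := myInt_one_le i_ee (myPos_of_le_mul he (by linarith) Be2)
    have h2 : 1 ≤ sff := myInt_one_le i_ff (myPos_of_le_mul hf (by linarith) Bf2)
    have h3 : sdd ≤ -1 := by linarith
    have hDB : vD - vB ≤ -d := by
      have := mul_le_mul_of_nonneg_right h3 hd.le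
      linarith
    have hx : vC - vA < -c := by linarith
    have h4 : sc0 ≤ -2 := myInt_le_neg_two i_c0 (myLt_neg_one_of_mul_le hc hx Bc1)
    have h5 : sa0 ≤ 0 := myNonpos_of_mul_le ha (by linarith) Ba1
    have h6 : sb0 ≤ 0 := myNonpos_of_mul_le hb (by linarith) Bb1
    linarith
  · exact heq
  · exfalso
    have h1 : se0 ≤ -1 := myInt_le_neg_one i_e0 (myNeg_of_mul_le he (by linarith) Be1)
    have h2 : sf0 ≤ -1 := myInt_le_neg_one i_f0 (myNeg_of_mul_le hf (by linarith) Bf1)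
    have h3 : scc ≤ -1 := by linarith
    have hx : vC - vA ≤ -c := by
      have := mul_le_mul_of_nonneg_right h3 hc.le
      linarith
    have hy : vD - vB < -d := by linarith
    have h4 : sd0 ≤ -2 := myInt_le_neg_two i_d0 (myLt_neg_one_of_mul_le hd hy Bd1)
    have h5 : 0 ≤ saa := myNonneg_of_le_mul ha (by linarith) Ba2
    have h6 : 0 ≤ sbb := myNonneg_of_le_mul hb (by linarith) Bb2
    linarith
end

section
/- Consider a metric graph Γ of type (1,1,1): vertices A, B, C, D; two parallel edges E_a, E_b between A and B of lengths a, b > 0; an edge E_c between A and C of length c > 0; an edge E_d between B and C of length d > 0; an edge E_e between C and D of length e > 0; and a loop E_f at D of length f > 0. Assume c = d. Let χ : Γ → ℝ be a continuous piecewise linear function with integer slopes such that χ is convex on each edge (including the loop away from D) and at every vertex the sum of outgoing slopes is at least −1. Then χ(A) = χ(B). -/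
open Set

private lemma chord_bounds {L : ℝ} (hL : 0 < L) {g : ℝ → ℝ}
    (hconv : ConvexOn ℝ (Icc 0 L) g) {s0 sL : ℝ}
    (h0 : HasDerivWithinAt g s0 (Icc 0 L) 0)
    (hL' : HasDerivWithinAt g sL (Icc 0 L) L) :
    s0 ≤ (g L - g 0) / L ∧ (g L - g 0) / L ≤ sL := by
  have hm0 : (0 : ℝ) ∈ Icc 0 L := ⟨le_refl _, hL.le⟩
  have hmL : L ∈ Icc (0:ℝ) L := ⟨hL.le, le_refl _⟩
  have h1 := hconv.le_slope_of_hasDerivWithinAt hm0 hmL hL h0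
  have h2 := hconv.slope_le_of_hasDerivWithinAt hm0 hmL hL hL'
  rw [slope_def_field] at h1 h2
  simp only [sub_zero] at h1 h2
  exact ⟨h1, h2⟩

private lemma int_gt {s : ℝ} (hs : ∃ n : ℤ, s = (n : ℝ)) {m : ℤ}
    (h : (m : ℝ) < s) : (m : ℝ) + 1 ≤ s := by
  obtain ⟨n, rfl⟩ := hs
  exact_mod_cast Int.add_one_le_iff.mpr (by exact_mod_cast h)

private lemma int_lt {s : ℝ} (hs : ∃ n : ℤ, s = (n : ℝ)) {m : ℤ}
    (h : s < (m : ℝ)) : s ≤ (m : ℝ) - 1 := by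
  obtain ⟨n, rfl⟩ := hs
  have : n ≤ m - 1 := Int.le_sub_one_iff.mpr (by exact_mod_cast h)
  have h2 : ((n:ℝ)) ≤ ((m - 1 : ℤ) : ℝ) := by exact_mod_cast this
  push_cast at h2
  linarith
/-- Lemma 4.3 of the paper: on a tropical curve of type (1,1,1) with the two
cut edges of equal length `c = d`, any piecewise linear function `χ` with
integer slopes satisfying `K_Γ + div(χ) ≥ 0` takes equal values at `A` and `B`.
Edges: `E_a, E_b` between `A` and `B`, `E_c` between `A` and `C`, `E_d`
between `B` and `C`, `E_e` between `C` and `D`, and a loop `E_f` at `D`. -/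
theorem type111_canonical_not_separating
    (a b c d e f : ℝ)
    (ha : 0 < a) (hb : 0 < b) (hc : 0 < c) (hd : 0 < d) (he : 0 < e) (hf : 0 < f)
    (hcd : c = d)
    (vA vB vC vD : ℝ)
    (fa fb fc fd fe ff : ℝ → ℝ)
    -- convexity of χ on each edge (including the loop away from D)
    (hconva : ConvexOn ℝ (Icc 0 a) fa) (hconvb : ConvexOn ℝ (Icc 0 b) fb)
    (hconvc : ConvexOn ℝ (Icc 0 c) fc) (hconvd : ConvexOn ℝ (Icc 0 d) fd)
    (hconve : ConvexOn ℝ (Icc 0 e) fe) (hconvf : ConvexOn ℝ (Icc 0 f) ff)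
    -- endpoint values
    (ha0 : fa 0 = vA) (haa : fa a = vB)
    (hb0 : fb 0 = vA) (hbb : fb b = vB)
    (hc0 : fc 0 = vA) (hcc : fc c = vC)
    (hd0 : fd 0 = vB) (hdd : fd d = vC)
    (he0 : fe 0 = vC) (hee : fe e = vD)
    (hf0 : ff 0 = vD) (hff : ff f = vD)
    -- one-sided derivatives at the endpoints of each edge
    (sa0 saa sb0 sbb sc0 scc sd0 sdd se0 see sf0 sff : ℝ)
    (hsa0 : HasDerivWithinAt fa sa0 (Icc 0 a) 0)
    (hsaa : HasDerivWithinAt fa saa (Icc 0 a) a)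
    (hsb0 : HasDerivWithinAt fb sb0 (Icc 0 b) 0)
    (hsbb : HasDerivWithinAt fb sbb (Icc 0 b) b)
    (hsc0 : HasDerivWithinAt fc sc0 (Icc 0 c) 0)
    (hscc : HasDerivWithinAt fc scc (Icc 0 c) c)
    (hsd0 : HasDerivWithinAt fd sd0 (Icc 0 d) 0)
    (hsdd : HasDerivWithinAt fd sdd (Icc 0 d) d)
    (hse0 : HasDerivWithinAt fe se0 (Icc 0 e) 0)
    (hsee : HasDerivWithinAt fe see (Icc 0 e) e)
    (hsf0 : HasDerivWithinAt ff sf0 (Icc 0 f) 0)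
    (hsff : HasDerivWithinAt ff sff (Icc 0 f) f)
    -- integrality of all slopes
    (hint : ∀ s ∈ ({sa0, saa, sb0, sbb, sc0, scc, sd0, sdd, se0, see, sf0, sff} :
      Set ℝ), ∃ n : ℤ, s = (n : ℝ))
    -- vertex conditions: sum of outgoing slopes at each vertex ≥ -1;
    -- at D the loop contributes the two outgoing slopes sf0 and -sff
    (hvA : sa0 + sb0 + sc0 ≥ -1)
    (hvB : -saa + -sbb + sd0 ≥ -1)
    (hvC : -scc + -sdd + se0 ≥ -1)
    (hvD : -see + sf0 + -sff ≥ -1) :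
    vA = vB := by

  -- chord inequalities on each edge
  obtain ⟨hA1, hA2⟩ := chord_bounds ha hconva hsa0 hsaa
  obtain ⟨hB1, hB2⟩ := chord_bounds hb hconvb hsb0 hsbb
  obtain ⟨hC1, hC2⟩ := chord_bounds hc hconvc hsc0 hscc
  obtain ⟨hD1, hD2⟩ := chord_bounds hd hconvd hsd0 hsdd
  obtain ⟨hE1, hE2⟩ := chord_bounds he hconve hse0 hsee
  obtain ⟨hF1, hF2⟩ := chord_bounds hf hconvf hsf0 hsff
  rw [ha0, haa] at hA1 hA2
  rw [hb0, hbb] at hB1 hB2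
  rw [hc0, hcc] at hC1 hC2
  rw [hd0, hdd] at hD1 hD2
  rw [he0, hee] at hE1 hE2
  rw [hf0, hff] at hF1 hF2
  -- loop: sf0 ≤ 0 ≤ sff
  have hloop0 : sf0 ≤ 0 := by
    have : (vD - vD) / f = 0 := by simp
    linarith [hF1, this]
  have hloopf : (0:ℝ) ≤ sff := by
    have : (vD - vD) / f = 0 := by simp
    linarith [hF2, this]
  -- see ≤ 1, hence se0 ≤ 1
  have hsee1 : see ≤ 1 := by linarith
  have hse01 : se0 ≤ 1 := le_trans (le_trans hE1 hE2) hsee1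
  -- scc + sdd ≤ 2
  have hsum : scc + sdd ≤ 2 := by linarith
  -- integrality facts
  have iaa := hint saa (by simp)
  have ibb := hint sbb (by simp)
  have ia0 := hint sa0 (by simp)
  have ib0 := hint sb0 (by simp)
  have icc := hint scc (by simp)
  have idd := hint sdd (by simp)
  rcases lt_trichotomy vA vB with hlt | heq | hgt
  · exfalso
    -- saa ≥ 1, sbb ≥ 1
    have hsaa1 : (1:ℝ) ≤ saa := by
      have : ((0:ℤ):ℝ) < saa := by
        push_cast
        have : 0 < (vB - vA) / a := div_pos (by linarith) ha
        linarith
      have := int_gt iaa this; push_cast at this; linarith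
    have hsbb1 : (1:ℝ) ≤ sbb := by
      have : ((0:ℤ):ℝ) < sbb := by
        push_cast
        have : 0 < (vB - vA) / b := div_pos (by linarith) hb
        linarith
      have := int_gt ibb this; push_cast at this; linarith
    have hsd01 : (1:ℝ) ≤ sd0 := by linarith
    -- vC - vB ≥ d
    have hvCd : d ≤ vC - vB := by
      have h1 : (1:ℝ) ≤ (vC - vB) / d := le_trans hsd01 hD1
      rw [le_div_iff₀ hd] at h1
      linarith
    have hsdd1 : (1:ℝ) ≤ sdd := by linarith
    -- scc > 1 hence scc ≥ 2
    have hscc2 : (2:ℝ) ≤ scc := by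
      have hgt1 : ((1:ℤ):ℝ) < scc := by
        push_cast
        have h1 : (1:ℝ) < (vC - vA) / c := by
          rw [lt_div_iff₀ hc]
          have : vC - vA = (vC - vB) + (vB - vA) := by ring
          rw [this]; rw [hcd]; linarith
        linarith
      have := int_gt icc hgt1; push_cast at this; linarith
    linarith
  · exact heq
  · exfalso
    -- sa0 ≤ -1, sb0 ≤ -1
    have hsa0n : sa0 ≤ -1 := by
      have h0 : sa0 < ((0:ℤ):ℝ) := by
        push_cast
        have : (vB - vA) / a < 0 := div_neg_of_neg_of_pos (by linarith) ha
        linarith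
      have := int_lt ia0 h0; push_cast at this; linarith
    have hsb0n : sb0 ≤ -1 := by
      have h0 : sb0 < ((0:ℤ):ℝ) := by
        push_cast
        have : (vB - vA) / b < 0 := div_neg_of_neg_of_pos (by linarith) hb
        linarith
      have := int_lt ib0 h0; push_cast at this; linarith
    have hsc01 : (1:ℝ) ≤ sc0 := by linarith
    -- vC - vA ≥ c
    have hvCc : c ≤ vC - vA := by
      have h1 : (1:ℝ) ≤ (vC - vA) / c := le_trans hsc01 hC1
      rw [le_div_iff₀ hc] at h1
      linarith
    have hscc1 : (1:ℝ) ≤ scc := by linarith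
    have hsdd2 : (2:ℝ) ≤ sdd := by
      have hgt1 : ((1:ℤ):ℝ) < sdd := by
        push_cast
        have h1 : (1:ℝ) < (vC - vB) / d := by
          rw [lt_div_iff₀ hd]
          have : vC - vB = (vC - vA) + (vA - vB) := by ring
          rw [this, ← hcd]; linarith
        linarith
      have := int_gt idd hgt1; push_cast at this; linarith
    linarith
end
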